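/- For every 2D grid function ω in W_h one has ‖ω‖_E ≤ (2√3/3)·‖ω‖ and (2/3)·‖ω‖ ≤ ‖ω‖_F ≤ (4/3)·‖ω‖. -/

import Mathlib

/-! The three points `(2i-2, 2j-1)`, `(2i-1, 2j-2)`, `(2i-1, 2j-1)` entering `‖ω‖_E` are three of
the four points of the `2 × 2` cell with corner `(2i-2, 2j-2)`, and these cells tile
`{0, …, 2J₁-1} × {0, …, 2J₂-1}`. Since `ω` vanishes on the lines `i = 0` and `j = 0`, the weighted
sum defining `‖ω‖_E²` is at most `3` times the sum defining `‖ω‖²`, i.e. `‖ω‖_E² ≤ (4/3)‖ω‖²`.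
All three inequalities follow from this and `0 ≤ ‖ω‖_E²`. -/

open Finset

noncomputable section

/-- spatial mesh size `1/(2J)` -/
def msh (J : ℕ) : ℝ := 1 / (2 * (J : ℝ))

/-- 2D discrete inner product -/
def gridIP2 (J₁ J₂ : ℕ) (ω ν : ℕ → ℕ → ℝ) : ℝ :=
  msh J₁ * msh J₂ *
    ∑ i ∈ Finset.Icc 1 (2 * J₁ - 1), ∑ j ∈ Finset.Icc 1 (2 * J₂ - 1), ω i j * ν i j

/-- 2D discrete `L²` norm -/
def gridNorm2 (J₁ J₂ : ℕ) (ω : ℕ → ℕ → ℝ) : ℝ :=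
  Real.sqrt (gridIP2 J₁ J₂ ω ω)

/-- the 2D norm `‖ω‖_E` -/
def gridNormE (J₁ J₂ : ℕ) (ω : ℕ → ℕ → ℝ) : ℝ :=
  2 / 3 * Real.sqrt (msh J₁ * msh J₂ *
    ∑ i ∈ Finset.Icc 1 J₁, ∑ j ∈ Finset.Icc 1 J₂,
      (ω (2 * i - 2) (2 * j - 1) ^ 2 + ω (2 * i - 1) (2 * j - 2) ^ 2
        + 3 * ω (2 * i - 1) (2 * j - 1) ^ 2))

/-- the 2D norm `‖ω‖_F = √((4/9)‖ω‖² + ‖ω‖_E²)` -/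
def gridNormF (J₁ J₂ : ℕ) (ω : ℕ → ℕ → ℝ) : ℝ :=
  Real.sqrt (4 / 9 * gridNorm2 J₁ J₂ ω ^ 2 + gridNormE J₁ J₂ ω ^ 2)

/-- compact operator `𝒜` in the `x`-direction (interior formula) -/
def cA2 (ω : ℕ → ℕ → ℝ) (i j : ℕ) : ℝ := (ω (i + 1) j + 10 * ω i j + ω (i - 1) j) / 12

/-- compact operator `ℬ` in the `y`-direction (interior formula) -/
def cB2 (ω : ℕ → ℕ → ℝ) (i j : ℕ) : ℝ := (ω i (j + 1) + 10 * ω i j + ω i (j - 1)) / 12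

/-- compact operator `ℋ = 𝒜ℬ` -/
def cH (ω : ℕ → ℕ → ℝ) : ℕ → ℕ → ℝ := cA2 (cB2 ω)

/-- second difference `δ_xδ_x̄` -/
def dxx2 (J₁ : ℕ) (ω : ℕ → ℕ → ℝ) (i j : ℕ) : ℝ :=
  (ω (i + 1) j - 2 * ω i j + ω (i - 1) j) / msh J₁ ^ 2

/-- second difference `δ_yδ_ȳ` -/
def dyy2 (J₂ : ℕ) (ω : ℕ → ℕ → ℝ) (i j : ℕ) : ℝ :=
  (ω i (j + 1) - 2 * ω i j + ω i (j - 1)) / msh J₂ ^ 2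

/-- compact discrete Laplacian `Φ = ℬδ_xδ_x̄ + 𝒜δ_yδ_ȳ` -/
def cPhi (J₁ J₂ : ℕ) (ω : ℕ → ℕ → ℝ) (i j : ℕ) : ℝ :=
  cB2 (dxx2 J₁ ω) i j + cA2 (dyy2 J₂ ω) i j

/-- membership in `W_h`: vanishing on the boundary indices -/
def memWh (J₁ J₂ : ℕ) (ω : ℕ → ℕ → ℝ) : Prop :=
  ∀ i j : ℕ, (i = 0 ∨ i = 2 * J₁ ∨ j = 0 ∨ j = 2 * J₂) → ω i j = 0

section Reindexing

variable {M : Type*} [AddCommMonoid M]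

theorem Finset.sum_Icc_one_eq_sum_range (f : ℕ → M) (n : ℕ) :
    ∑ i ∈ Icc 1 n, f i = ∑ k ∈ range n, f (k + 1) := by
  induction n with
  | zero => simp
  | succ n ih => rw [sum_Icc_succ_top (by omega), ih, sum_range_succ]

theorem Finset.sum_range_two_mul (f : ℕ → M) (n : ℕ) :
    ∑ i ∈ range (2 * n), f i = ∑ k ∈ range n, (f (2 * k) + f (2 * k + 1)) := by
  induction n with
  | zero => simp
  | succ n ih => rw [mul_add_one, sum_range_succ, sum_range_succ, sum_range_succ, ih, add_assoc]

theorem Finset.sum_Icc_one_two_mul_sub_one (f : ℕ → M) (hf : f 0 = 0) (n : ℕ) :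
    ∑ i ∈ Icc 1 (2 * n - 1), f i = ∑ k ∈ range n, (f (2 * k) + f (2 * k + 1)) := by
  rcases Nat.eq_zero_or_pos n with rfl | hn
  · simp
  have hn' : 1 ≤ 2 * n := by omega
  rw [← sum_range_two_mul, sum_Icc_one_eq_sum_range, ← Nat.sub_add_cancel hn', sum_range_succ',
    hf, add_zero, Nat.sub_add_cancel hn']

end Reindexing

section GridNorms

variable {J₁ J₂ : ℕ} {ω : ℕ → ℕ → ℝ}

theorem msh_nonneg (J : ℕ) : 0 ≤ msh J := by
  unfold msh
  positivity

theorem gridIP2_self_nonneg : 0 ≤ gridIP2 J₁ J₂ ω ω :=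
  mul_nonneg (mul_nonneg (msh_nonneg J₁) (msh_nonneg J₂))
    (sum_nonneg fun i _ => sum_nonneg fun j _ => mul_self_nonneg (ω i j))

theorem gridNorm2_nonneg : 0 ≤ gridNorm2 J₁ J₂ ω :=
  Real.sqrt_nonneg _

theorem sum_sq_eq_sum_cells (hω : memWh J₁ J₂ ω) :
    ∑ i ∈ Icc 1 (2 * J₁ - 1), ∑ j ∈ Icc 1 (2 * J₂ - 1), ω i j * ω i j =
      ∑ k ∈ range J₁, ∑ l ∈ range J₂,
        (ω (2 * k) (2 * l) ^ 2 + ω (2 * k) (2 * l + 1) ^ 2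
          + ω (2 * k + 1) (2 * l) ^ 2 + ω (2 * k + 1) (2 * l + 1) ^ 2) := by
  have hrow : ∀ i, ∑ j ∈ Icc 1 (2 * J₂ - 1), ω i j * ω i j =
      ∑ l ∈ range J₂, (ω i (2 * l) ^ 2 + ω i (2 * l + 1) ^ 2) := fun i => by
    simp only [sq]
    exact sum_Icc_one_two_mul_sub_one (fun j => ω i j * ω i j)
      (by simp [hω i 0 (by simp)]) J₂
  simp_rw [hrow]
  rw [sum_Icc_one_two_mul_sub_one _ (by simp [hω 0 _ (by simp)])]
  simp only [← sum_add_distrib, add_assoc]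

theorem sum_sublattices_eq :
    ∑ i ∈ Icc 1 J₁, ∑ j ∈ Icc 1 J₂,
      (ω (2 * i - 2) (2 * j - 1) ^ 2 + ω (2 * i - 1) (2 * j - 2) ^ 2
        + 3 * ω (2 * i - 1) (2 * j - 1) ^ 2) =
      ∑ k ∈ range J₁, ∑ l ∈ range J₂,
        (ω (2 * k) (2 * l + 1) ^ 2 + ω (2 * k + 1) (2 * l) ^ 2
          + 3 * ω (2 * k + 1) (2 * l + 1) ^ 2) := by
  simp only [sum_Icc_one_eq_sum_range, mul_add_one, Nat.add_sub_cancel, Nat.add_succ_sub_one]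

theorem sum_sublattices_le (hω : memWh J₁ J₂ ω) :
    ∑ i ∈ Icc 1 J₁, ∑ j ∈ Icc 1 J₂,
      (ω (2 * i - 2) (2 * j - 1) ^ 2 + ω (2 * i - 1) (2 * j - 2) ^ 2
        + 3 * ω (2 * i - 1) (2 * j - 1) ^ 2) ≤
      3 * ∑ i ∈ Icc 1 (2 * J₁ - 1), ∑ j ∈ Icc 1 (2 * J₂ - 1), ω i j * ω i j := by
  rw [sum_sublattices_eq, sum_sq_eq_sum_cells hω, mul_sum]
  refine sum_le_sum fun k _ => ?_
  rw [mul_sum]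
  refine sum_le_sum fun l _ => ?_
  linarith [sq_nonneg (ω (2 * k) (2 * l)), sq_nonneg (ω (2 * k) (2 * l + 1)),
    sq_nonneg (ω (2 * k + 1) (2 * l))]

theorem gridNormE_sq_le (hω : memWh J₁ J₂ ω) :
    gridNormE J₁ J₂ ω ^ 2 ≤ 4 / 3 * gridNorm2 J₁ J₂ ω ^ 2 := by
  have hh : 0 ≤ msh J₁ * msh J₂ := mul_nonneg (msh_nonneg J₁) (msh_nonneg J₂)
  have hS : 0 ≤ ∑ i ∈ Icc 1 J₁, ∑ j ∈ Icc 1 J₂,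
      (ω (2 * i - 2) (2 * j - 1) ^ 2 + ω (2 * i - 1) (2 * j - 2) ^ 2
        + 3 * ω (2 * i - 1) (2 * j - 1) ^ 2) := by positivity
  rw [gridNormE, gridNorm2, mul_pow, Real.sq_sqrt (mul_nonneg hh hS),
    Real.sq_sqrt (gridIP2_self_nonneg), gridIP2]
  linarith [mul_le_mul_of_nonneg_left (sum_sublattices_le hω) hh]

theorem gridNormE_le_gridNorm2 (hω : memWh J₁ J₂ ω) :
    gridNormE J₁ J₂ ω ≤ 2 * Real.sqrt 3 / 3 * gridNorm2 J₁ J₂ ω := by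
  refine le_of_pow_le_pow_left₀ two_ne_zero (mul_nonneg (by positivity) gridNorm2_nonneg) ?_
  rw [mul_pow, div_pow, mul_pow, Real.sq_sqrt zero_le_three]
  linarith [gridNormE_sq_le hω]

theorem gridNorm2_le_gridNormF :
    2 / 3 * gridNorm2 J₁ J₂ ω ≤ gridNormF J₁ J₂ ω :=
  Real.le_sqrt_of_sq_le (by nlinarith [sq_nonneg (gridNormE J₁ J₂ ω)])

theorem gridNormF_le_gridNorm2 (hω : memWh J₁ J₂ ω) :
    gridNormF J₁ J₂ ω ≤ 4 / 3 * gridNorm2 J₁ J₂ ω :=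
  (Real.sqrt_le_left (mul_nonneg (by positivity) gridNorm2_nonneg)).2
    (by nlinarith [gridNormE_sq_le hω])

end GridNorms

theorem stmt_14_general (J₁ J₂ : ℕ) (ω : ℕ → ℕ → ℝ) (hω : memWh J₁ J₂ ω) :
    gridNormE J₁ J₂ ω ≤ 2 * Real.sqrt 3 / 3 * gridNorm2 J₁ J₂ ω ∧
      2 / 3 * gridNorm2 J₁ J₂ ω ≤ gridNormF J₁ J₂ ω ∧
      gridNormF J₁ J₂ ω ≤ 4 / 3 * gridNorm2 J₁ J₂ ω :=
  ⟨gridNormE_le_gridNorm2 hω, gridNorm2_le_gridNormF, gridNormF_le_gridNorm2 hω⟩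

/-- For every 2D grid function `ω ∈ W_h`,
`‖ω‖_E ≤ (2√3/3)‖ω‖` and `(2/3)‖ω‖ ≤ ‖ω‖_F ≤ (4/3)‖ω‖`. -/
theorem stmt_14 (J₁ J₂ : ℕ) (hJ₁ : 0 < J₁) (hJ₂ : 0 < J₂)
    (ω : ℕ → ℕ → ℝ) (hω : memWh J₁ J₂ ω) :
    gridNormE J₁ J₂ ω ≤ 2 * Real.sqrt 3 / 3 * gridNorm2 J₁ J₂ ω ∧
      2 / 3 * gridNorm2 J₁ J₂ ω ≤ gridNormF J₁ J₂ ω ∧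
      gridNormF J₁ J₂ ω ≤ 4 / 3 * gridNorm2 J₁ J₂ ω :=
  stmt_14_general J₁ J₂ ω hω
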